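/- Fix b ∈ ℝ^m and let Ψ : ℤ^n → ℝ⁺ satisfy Ψ(a) → 0 as |a| → ∞, with n + m > 2. Let δ > 0 and s := (n−1)m + δ. If Σ_{a ∈ ℤ^n \ {0}} Ψ(a)^δ |a|^{m−δ} < ∞, then H^s(W_{n,m}^b(Ψ)) = 0. -/

import Mathlib

/-!
Hausdorff–Cantelli: `W` lies in the limsup of the sets
`A_a = {X ∈ [0,1)^{n×m} : ‖a·x_j - b_j‖ < ψ_a for all j}`, so it is enough to cover each `A_a`
by sets whose diameters satisfy `∑ diam^s = O(ψ_a^δ |a|^{m-δ})`.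
Replacing `Ψ(a)` by `ψ_a = min Ψ(a) 1` does not change `A_a`, since `‖·‖ ≤ 1/2`.

Pick `i₀` with `|a_{i₀}| = |a|` and put `ρ = ψ_a / |a|`. Cut every coordinate `x_{j,i}`, `i ≠ i₀`,
into intervals of length `ρ`, and record the integer `p_j` nearest to `a·x_j - b_j`. On each piece
`a_{i₀} x_{j,i₀}` is then known up to `2ψ_a + n|a|ρ`, so `x_{j,i₀}` is known up to `(n+2)ρ`.
This gives `O(|a|^m ρ^{-(n-1)m})` pieces of diameter `O(ρ)`, hence
`∑ diam^s = O(|a|^m ρ^δ) = O(ψ_a^δ |a|^{m-δ})`.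
-/

open MeasureTheory Set Filter
open scoped ENNReal

def IsDimFun (f : ℝ → ℝ) : Prop :=
  ContinuousOn f (Set.Ici 0) ∧ MonotoneOn f (Set.Ici 0) ∧
    (∀ r, 0 ≤ r → 0 ≤ f r) ∧ Filter.Tendsto f (nhdsWithin 0 (Set.Ioi 0)) (nhds 0)

noncomputable def hMeasure {X : Type*} [EMetricSpace X] [MeasurableSpace X] [BorelSpace X]
    (f : ℝ → ℝ) : Measure X :=
  Measure.mkMetric (fun d => ENNReal.ofReal (f d.toReal))

/-- `|a| := max |a_i|` for an integer vector. -/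
def anorm {n : ℕ} (a : Fin n → ℤ) : ℕ := Finset.univ.sup fun i => (a i).natAbs

/-- Distance from a real number to the nearest integer. -/
noncomputable def intDist (x : ℝ) : ℝ := |x - round x|

/-- The set `W_{n,m}^b(Ψ)` of `X ∈ [0,1)^{n×m}` such that
`‖a · x_j - b_j‖ < Ψ(a)` for all `j` for infinitely many `a ∈ ℤ^n`. -/
def W (n m : ℕ) (b : Fin m → ℝ) (Ψ : (Fin n → ℤ) → ℝ) :
    Set (EuclideanSpace ℝ (Fin m × Fin n)) :=
  {X | (∀ ji, X ji ∈ Set.Ico (0:ℝ) 1) ∧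
    {a : Fin n → ℤ |
      ∀ j : Fin m, intDist ((∑ i, (a i : ℝ) * X (j, i)) - b j) < Ψ a}.Infinite}

/-- The unit box `[0,1)^{n×m}`. -/
def box (n m : ℕ) : Set (EuclideanSpace ℝ (Fin m × Fin n)) :=
  {X | ∀ ji, X ji ∈ Set.Ico (0:ℝ) 1}

open scoped Topology

theorem hausdorffMeasure_limsup_cofinite_eq_zero {X ι : Type*} [EMetricSpace X]
    [MeasurableSpace X] [BorelSpace X] [Countable ι] {s : ℝ} (hs : 0 < s) {t : ι → Set X}
    (ht : ∑' i, Metric.ediam (t i) ^ s ≠ ∞) : μH[s] (limsup t cofinite) = 0 := by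
  set tail : Finset ι → ℝ≥0∞ := fun F => ∑' i : {i // i ∉ F}, Metric.ediam (t i) ^ s
  have htail : Tendsto tail atTop (𝓝 0) := ENNReal.tendsto_tsum_compl_atTop_zero ht
  have hr : Tendsto (fun F => tail F ^ s⁻¹) atTop (𝓝 0) := by
    have := ((ENNReal.continuous_rpow_const (y := s⁻¹)).tendsto 0).comp htail
    rwa [ENNReal.zero_rpow_of_pos (inv_pos.2 hs)] at this
  -- No mesh hypothesis is needed: a set of the tail has `diam^s` at most the whole tail sum.
  have hdiam : ∀ F, ∀ i : {i // i ∉ F}, Metric.ediam (t i) ≤ tail F ^ s⁻¹ := fun F i => by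
    rw [← ENNReal.rpow_rpow_inv hs.ne' (Metric.ediam (t i))]
    exact ENNReal.rpow_le_rpow (ENNReal.le_tsum i) (inv_nonneg.2 hs.le)
  have hcover : ∀ F : Finset ι, limsup t cofinite ⊆ ⋃ i : {i // i ∉ F}, t i := fun F x hx => by
    rw [mem_limsup_iff_frequently_mem, frequently_cofinite_iff_infinite] at hx
    obtain ⟨i, hxi, hiF⟩ := hx.exists_notMem_finset F
    exact mem_iUnion.2 ⟨⟨i, hiF⟩, hxi⟩
  refine le_antisymm ?_ zero_le
  calc μH[s] (limsup t cofinite)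
      ≤ liminf tail atTop := Measure.hausdorffMeasure_le_liminf_tsum s _ _ hr
        (fun F (i : {i // i ∉ F}) => t i) (.of_forall hdiam) (.of_forall hcover)
    _ = 0 := htail.liminf_eq

lemma tsum_ediam_inter_preimage_singleton_rpow_le {X κ : Type*} [PseudoEMetricSpace X]
    {A : Set X} {L : X → κ} {S : Finset κ} (hS : ∀ x ∈ A, L x ∈ S) {D : ℝ≥0∞}
    (hD : ∀ k, Metric.ediam (A ∩ L ⁻¹' {k}) ≤ D) {s : ℝ} (hs : 0 < s) :
    ∑' k, Metric.ediam (A ∩ L ⁻¹' {k}) ^ s ≤ S.card * D ^ s := by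
  rw [tsum_eq_sum (s := S) fun k hk => ?_]
  · rw [← nsmul_eq_mul]
    exact Finset.sum_le_card_nsmul _ _ _ fun k _ => ENNReal.rpow_le_rpow (hD k) hs.le
  · have : A ∩ L ⁻¹' {k} = ∅ :=
      eq_empty_of_forall_notMem fun x ⟨hx, hxk⟩ => hk (Set.mem_singleton_iff.1 hxk ▸ hS x hx)
    rw [this, Metric.ediam_empty, ENNReal.zero_rpow_of_pos hs]

lemma abs_sub_lt_of_natFloor_div_eq {x y ρ : ℝ} (hx : 0 ≤ x) (hy : 0 ≤ y) (hρ : 0 < ρ)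
    (h : ⌊x / ρ⌋₊ = ⌊y / ρ⌋₊) : |x - y| < ρ := by
  have hfloor : ⌊x / ρ⌋ = ⌊y / ρ⌋ := by
    rw [← Int.natCast_floor_eq_floor (by positivity), h,
      Int.natCast_floor_eq_floor (by positivity)]
  have := Int.abs_sub_lt_one_of_floor_eq_floor hfloor
  rwa [← sub_div, abs_div, abs_of_pos hρ, div_lt_one hρ] at this

lemma abs_sub_lt_of_round_eq {u v ψ : ℝ} (h : round u = round v) (hu : intDist u < ψ)
    (hv : intDist v < ψ) : |u - v| < 2 * ψ := by
  unfold intDist at hu hv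
  rw [h] at hu
  calc |u - v| = |(u - round v) - (v - round v)| := by ring_nf
    _ < 2 * ψ := (abs_sub _ _).trans_lt (by linarith)

lemma abs_le_of_abs_sum_mul_le {ι : Type*} [Fintype ι] {a v : ι → ℝ} {i₀ : ι} {K ε ρ : ℝ}
    (hK : 0 < K) (hρ : 0 ≤ ρ) (hai₀ : |a i₀| = K) (ha : ∀ i, |a i| ≤ K)
    (hv : ∀ i ≠ i₀, |v i| ≤ ρ) (hsum : |∑ i, a i * v i| ≤ ε) :
    |v i₀| ≤ ε / K + Fintype.card ι * ρ := by
  classical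
  have hrest : |∑ i ∈ Finset.univ.erase i₀, a i * v i| ≤ Fintype.card ι * (K * ρ) := calc
    _ ≤ ∑ i ∈ Finset.univ.erase i₀, |a i * v i| := Finset.abs_sum_le_sum_abs _ _
    _ ≤ ∑ _i ∈ Finset.univ.erase i₀, K * ρ := Finset.sum_le_sum fun i hi => by
      rw [abs_mul]
      exact mul_le_mul (ha i) (hv i (Finset.ne_of_mem_erase hi)) (abs_nonneg _) hK.le
    _ ≤ ∑ _i : ι, K * ρ :=
      Finset.sum_le_sum_of_subset_of_nonneg (Finset.erase_subset _ _) fun _ _ _ => by positivity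
    _ = _ := by simp
  have hpivot : K * |v i₀| ≤ K * (ε / K + Fintype.card ι * ρ) := calc
    K * |v i₀| = |∑ i, a i * v i - ∑ i ∈ Finset.univ.erase i₀, a i * v i| := by
      rw [← Finset.add_sum_erase _ _ (Finset.mem_univ i₀), add_sub_cancel_right, abs_mul, hai₀]
    _ ≤ ε + Fintype.card ι * (K * ρ) := (abs_sub _ _).trans (add_le_add hsum hrest)
    _ = K * (ε / K + Fintype.card ι * ρ) := by field_simp
  exact le_of_mul_le_mul_left hpivot hK

lemma EuclideanSpace.dist_le_of_forall_abs_sub_le {ι : Type*} [Fintype ι]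
    {x y : EuclideanSpace ℝ ι} {c : ℝ} (hc : 0 ≤ c) (h : ∀ i, |x i - y i| ≤ c) :
    dist x y ≤ √(Fintype.card ι) * c := by
  rw [EuclideanSpace.dist_eq, ← Real.sqrt_sq hc, ← Real.sqrt_mul (Nat.cast_nonneg _)]
  refine Real.sqrt_le_sqrt ?_
  calc ∑ i, dist (x i) (y i) ^ 2 ≤ ∑ _i : ι, c ^ 2 := Finset.sum_le_sum fun i _ => by
        rw [Real.dist_eq]; exact pow_le_pow_left₀ (abs_nonneg _) (h i) 2
    _ = _ := by simp

lemma Real.min_one_rpow_le {x δ : ℝ} (hδ : 0 ≤ δ) : min x 1 ^ δ ≤ x ^ δ := by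
  rcases le_total x 1 with h | h
  · rw [min_eq_left h]
  · rw [min_eq_right h, Real.one_rpow]
    exact Real.one_le_rpow h hδ

lemma mul_pow_mul_rpow_le {m q : ℕ} {A c K ψ δ N M : ℝ} (hc : 0 ≤ c) (hK : 0 < K) (hψ : 0 < ψ)
    (hN0 : 0 ≤ N) (hN : N ≤ A * K) (hM0 : 0 ≤ M) (hM : M ≤ 2 * (K / ψ)) :
    N ^ m * M ^ q * (c * (ψ / K)) ^ ((q : ℝ) + δ) ≤
      A ^ m * 2 ^ q * c ^ ((q : ℝ) + δ) * (ψ ^ δ * K ^ ((m : ℝ) - δ)) := by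
  have hρ : 0 < ψ / K := div_pos hψ hK
  calc N ^ m * M ^ q * (c * (ψ / K)) ^ ((q : ℝ) + δ)
      ≤ (A * K) ^ m * (2 * (K / ψ)) ^ q * (c * (ψ / K)) ^ ((q : ℝ) + δ) := by
        gcongr
        exact pow_nonneg (hN0.trans hN) m
    _ = A ^ m * 2 ^ q * c ^ ((q : ℝ) + δ) * (K ^ m * (ψ / K) ^ δ * (K / ψ * (ψ / K)) ^ q) := by
      rw [Real.mul_rpow hc hρ.le, Real.rpow_add hρ, Real.rpow_natCast]; ring
    _ = A ^ m * 2 ^ q * c ^ ((q : ℝ) + δ) * (ψ ^ δ * K ^ ((m : ℝ) - δ)) := by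
      rw [show K / ψ * (ψ / K) = 1 by field_simp, one_pow, mul_one, Real.div_rpow hψ.le hK.le,
        Real.rpow_sub hK, Real.rpow_natCast]
      ring

section

variable {n m : ℕ}

lemma natAbs_le_anorm (a : Fin n → ℤ) (i : Fin n) : (a i).natAbs ≤ anorm a :=
  Finset.le_sup (f := fun i => (a i).natAbs) (Finset.mem_univ i)

lemma abs_le_anorm (a : Fin n → ℤ) (i : Fin n) : |(a i : ℝ)| ≤ anorm a := by
  rw [← Int.cast_abs, Int.abs_eq_natAbs]
  exact_mod_cast natAbs_le_anorm a i

lemma one_le_anorm {a : Fin n → ℤ} (ha : a ≠ 0) : 1 ≤ anorm a := by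
  obtain ⟨i, hi⟩ := Function.ne_iff.1 ha
  exact (Int.natAbs_pos.2 hi).trans_le (natAbs_le_anorm a i)

lemma exists_natAbs_eq_anorm {a : Fin n → ℤ} (ha : a ≠ 0) : ∃ i, (a i).natAbs = anorm a := by
  obtain ⟨i, -⟩ := Function.ne_iff.1 ha
  obtain ⟨i₀, -, h⟩ :=
    Finset.exists_mem_eq_sup Finset.univ ⟨i, Finset.mem_univ i⟩ fun i => (a i).natAbs
  exact ⟨i₀, h.symm⟩

def approxSet (b : Fin m → ℝ) (ψ : ℝ) (a : Fin n → ℤ) :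
    Set (EuclideanSpace ℝ (Fin m × Fin n)) :=
  {X | X ∈ box n m ∧ ∀ j, intDist ((∑ i, (a i : ℝ) * X (j, i)) - b j) < ψ}

noncomputable def cellLabel (b : Fin m → ℝ) (ρ : ℝ) (a : Fin n → ℤ) (i₀ : Fin n)
    (X : EuclideanSpace ℝ (Fin m × Fin n)) : (Fin m → ℤ) × (Fin m → Fin n → ℕ) :=
  (fun j => round ((∑ i, (a i : ℝ) * X (j, i)) - b j),
    fun j i => if i = i₀ then 0 else ⌊X (j, i) / ρ⌋₊)

def cell (b : Fin m → ℝ) (ψ : ℝ) (a : Fin n → ℤ) (i₀ : Fin n)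
    (k : (Fin m → ℤ) × (Fin m → Fin n → ℕ)) : Set (EuclideanSpace ℝ (Fin m × Fin n)) :=
  approxSet b ψ a ∩ cellLabel b (ψ / (anorm a : ℝ)) a i₀ ⁻¹' {k}

noncomputable def labelFinset (P G : ℕ) (i₀ : Fin n) : Finset ((Fin m → ℤ) × (Fin m → Fin n → ℕ)) :=
  Fintype.piFinset (fun _ => Finset.Icc (-(P : ℤ)) P) ×ˢ
    Fintype.piFinset fun _ => Fintype.piFinset fun i =>
      if i = i₀ then {0} else Finset.range (G + 1)

lemma card_labelFinset (P G : ℕ) (i₀ : Fin n) :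
    (labelFinset (m := m) P G i₀).card = (2 * P + 1) ^ m * (G + 1) ^ ((n - 1) * m) := by
  have hrow : (Fintype.piFinset fun i : Fin n =>
      if i = i₀ then ({0} : Finset ℕ) else Finset.range (G + 1)).card = (G + 1) ^ (n - 1) := by
    simp [Fintype.card_piFinset, apply_ite Finset.card, Finset.prod_ite, Finset.filter_ne',
      Finset.card_erase_of_mem]
  rw [labelFinset, Finset.card_product, Fintype.card_piFinset, Fintype.card_piFinset, hrow,
    Int.card_Icc]
  simp only [Finset.prod_const, Finset.card_univ, Fintype.card_fin, ← pow_mul]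
  congr 2
  omega

lemma abs_sum_mul_sub_le (a : Fin n → ℤ) {X : EuclideanSpace ℝ (Fin m × Fin n)} (hX : X ∈ box n m)
    (j : Fin m) (c : ℝ) : |(∑ i, (a i : ℝ) * X (j, i)) - c| ≤ n * anorm a + |c| := by
  refine (abs_sub _ _).trans (add_le_add_left ?_ _)
  calc |∑ i, (a i : ℝ) * X (j, i)| ≤ ∑ i, |(a i : ℝ) * X (j, i)| := Finset.abs_sum_le_sum_abs _ _
    _ ≤ ∑ _i : Fin n, (anorm a : ℝ) := Finset.sum_le_sum fun i _ => by
      rw [abs_mul, abs_of_nonneg (hX _).1]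
      exact mul_le_of_le_one_right (abs_nonneg _) (hX _).2.le |>.trans (abs_le_anorm a i)
    _ = n * anorm a := by simp

lemma cellLabel_mem_labelFinset {b : Fin m → ℝ} {β : ℕ} (hb : ∀ j, |b j| ≤ β) {ρ : ℝ}
    (hρ : 0 < ρ) (a : Fin n → ℤ) (i₀ : Fin n) {X : EuclideanSpace ℝ (Fin m × Fin n)}
    (hX : X ∈ box n m) :
    cellLabel b ρ a i₀ X ∈ labelFinset (n * anorm a + β + 1) ⌊ρ⁻¹⌋₊ i₀ := by
  refine Finset.mem_product.2 ⟨Fintype.mem_piFinset.2 fun j => ?_,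
    Fintype.mem_piFinset.2 fun j => Fintype.mem_piFinset.2 fun i => ?_⟩
  · have hu := abs_sum_mul_sub_le a hX j (b j)
    set u := (∑ i, (a i : ℝ) * X (j, i)) - b j
    have hround : |(round u : ℝ)| ≤ n * anorm a + β + 1 := calc
      |(round u : ℝ)| ≤ |u| + |u - round u| := by
        simpa using abs_sub u (u - round u)
      _ ≤ n * anorm a + β + 1 := by
        linarith [hb j, abs_sub_round u]
    rw [Finset.mem_Icc, ← abs_le]
    exact_mod_cast hround
  · by_cases hi : i = i₀
    · simp [cellLabel, hi]
    · simp only [cellLabel, if_neg hi, Finset.mem_range, Nat.lt_succ_iff]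
      refine Nat.floor_le_floor ?_
      rw [div_eq_mul_inv]
      exact mul_le_of_le_one_left (by positivity) (hX _).2.le

lemma ediam_cell_le {b : Fin m → ℝ} {ψ : ℝ} (hψ : 0 < ψ) {a : Fin n → ℤ} (ha : a ≠ 0)
    {i₀ : Fin n} (hi₀ : (a i₀).natAbs = anorm a) (k : (Fin m → ℤ) × (Fin m → Fin n → ℕ)) :
    Metric.ediam (cell b ψ a i₀ k) ≤ ENNReal.ofReal (√(m * n) * ((n + 2) * (ψ / anorm a))) := by
  set K : ℝ := (anorm a : ℝ)
  have hK : 0 < K := Nat.cast_pos.2 (one_le_anorm ha)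
  have hai₀ : |(a i₀ : ℝ)| = K := by rw [← Int.cast_abs, Int.abs_eq_natAbs, hi₀]; rfl
  set ρ := ψ / K
  have hρ : 0 < ρ := div_pos hψ hK
  refine Metric.ediam_le_of_forall_dist_le fun X ⟨⟨hXbox, hXψ⟩, hXk⟩ Y ⟨⟨hYbox, hYψ⟩, hYk⟩ => ?_
  have hlab : cellLabel b ρ a i₀ X = cellLabel b ρ a i₀ Y := hXk.trans hYk.symm
  have hgrid : ∀ j, ∀ i ≠ i₀, |X (j, i) - Y (j, i)| ≤ ρ := fun j i hi => by
    have h := congrFun (congrFun (congrArg Prod.snd hlab) j) i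
    simp only [cellLabel, if_neg hi] at h
    exact (abs_sub_lt_of_natFloor_div_eq (hXbox _).1 (hYbox _).1 hρ h).le
  have hpivot : ∀ j, |X (j, i₀) - Y (j, i₀)| ≤ (n + 2) * ρ := fun j => by
    have hround := congrFun (congrArg Prod.fst hlab) j
    simp only [cellLabel] at hround
    have hsum : |∑ i, (a i : ℝ) * (X (j, i) - Y (j, i))| ≤ 2 * ψ := by
      rw [show ∑ i, (a i : ℝ) * (X (j, i) - Y (j, i)) =
          ((∑ i, (a i : ℝ) * X (j, i)) - b j) - ((∑ i, (a i : ℝ) * Y (j, i)) - b j) by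
        simp only [mul_sub, Finset.sum_sub_distrib]; ring]
      exact (abs_sub_lt_of_round_eq hround (hXψ j) (hYψ j)).le
    calc _ ≤ 2 * ψ / K + Fintype.card (Fin n) * ρ :=
          abs_le_of_abs_sum_mul_le hK hρ.le hai₀ (abs_le_anorm a) (hgrid j) hsum
      _ = (n + 2) * ρ := by simp only [Fintype.card_fin, ρ]; ring
  have hcoord : ∀ ji : Fin m × Fin n, |X ji - Y ji| ≤ (n + 2) * ρ := fun ⟨j, i⟩ => by
    by_cases hi : i = i₀
    · subst hi; exact hpivot j
    · exact (hgrid j i hi).trans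
        (le_mul_of_one_le_left hρ.le (by linarith [n.cast_nonneg (α := ℝ)]))
  simpa using EuclideanSpace.dist_le_of_forall_abs_sub_le (by positivity) hcoord

lemma approxSet_eq_empty (hm : 0 < m) (b : Fin m → ℝ) {ψ : ℝ} (hψ : ψ ≤ 0) (a : Fin n → ℤ) :
    approxSet b ψ a = ∅ :=
  eq_empty_of_forall_notMem fun _ ⟨_, h⟩ => (abs_nonneg _).not_gt ((h ⟨0, hm⟩).trans_le hψ)

lemma tsum_ediam_cell_rpow_le (hm : 0 < m) {b : Fin m → ℝ} {β : ℕ} (hb : ∀ j, |b j| ≤ β)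
    {ψ : ℝ} (hψ : ψ ≤ 1) {a : Fin n → ℤ} (ha : a ≠ 0) {i₀ : Fin n}
    (hi₀ : (a i₀).natAbs = anorm a) {δ : ℝ} (hδ : 0 < δ) :
    ∑' k, Metric.ediam (cell b ψ a i₀ k) ^ (((n - 1) * m : ℕ) + δ) ≤
      ENNReal.ofReal ((2 * n + 2 * β + 3) ^ m * 2 ^ ((n - 1) * m) *
        (√(m * n) * (n + 2)) ^ (((n - 1) * m : ℕ) + δ)) *
      ENNReal.ofReal (ψ ^ δ * (anorm a : ℝ) ^ ((m : ℝ) - δ)) := by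
  set q := (n - 1) * m
  have hs : 0 < (q : ℝ) + δ := by positivity
  rcases le_or_gt ψ 0 with hψ0 | hψ0
  · simp [cell, approxSet_eq_empty hm b hψ0, ENNReal.zero_rpow_of_pos hs]
  set K : ℝ := (anorm a : ℝ)
  have hK : 1 ≤ K := Nat.one_le_cast.2 (one_le_anorm ha)
  set P := n * anorm a + β + 1
  set G := ⌊(ψ / K)⁻¹⌋₊
  have hP : ((2 * P + 1 : ℕ) : ℝ) ≤ (2 * n + 2 * β + 3) * K := by
    push_cast [P]
    nlinarith [n.cast_nonneg (α := ℝ), β.cast_nonneg (α := ℝ)]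
  have hG : ((G + 1 : ℕ) : ℝ) ≤ 2 * (K / ψ) := by
    have h1 : 1 ≤ K / ψ := (one_le_div hψ0).2 (hψ.trans hK)
    push_cast [G]
    linarith [Nat.floor_le (a := (ψ / K)⁻¹) (by positivity), inv_div ψ K]
  calc ∑' k, Metric.ediam (cell b ψ a i₀ k) ^ ((q : ℝ) + δ)
      ≤ (labelFinset P G i₀).card *
          ENNReal.ofReal (√(m * n) * ((n + 2) * (ψ / K))) ^ ((q : ℝ) + δ) :=
        tsum_ediam_inter_preimage_singleton_rpow_le
          (fun X hX => cellLabel_mem_labelFinset hb (by positivity) a i₀ hX.1)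
          (ediam_cell_le hψ0 ha hi₀) hs
    _ = ENNReal.ofReal (((2 * P + 1 : ℕ) : ℝ) ^ m * ((G + 1 : ℕ) : ℝ) ^ q *
          (√(m * n) * (n + 2) * (ψ / K)) ^ ((q : ℝ) + δ)) := by
        rw [card_labelFinset, ENNReal.ofReal_rpow_of_nonneg (by positivity) hs.le,
          ← ENNReal.ofReal_natCast, ← ENNReal.ofReal_mul (by positivity)]
        push_cast [q]
        ring_nf
    _ ≤ ENNReal.ofReal ((2 * n + 2 * β + 3) ^ m * 2 ^ q * (√(m * n) * (n + 2)) ^ ((q : ℝ) + δ) *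
          (ψ ^ δ * K ^ ((m : ℝ) - δ))) :=
        ENNReal.ofReal_le_ofReal <| mul_pow_mul_rpow_le (by positivity) (by positivity) hψ0
          (by positivity) hP (by positivity) hG
    _ = _ := ENNReal.ofReal_mul (by positivity)

lemma W_subset_limsup_cell (b : Fin m → ℝ) (Ψ : (Fin n → ℤ) → ℝ)
    (i₀ : {a : Fin n → ℤ // a ≠ 0} → Fin n) :
    W n m b Ψ ⊆ limsup (fun p : {a : Fin n → ℤ // a ≠ 0} × ((Fin m → ℤ) × (Fin m → Fin n → ℕ)) =>
      cell b (min (Ψ p.1) 1) p.1 (i₀ p.1) p.2) cofinite := by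
  rintro X ⟨hbox, hinf⟩
  rw [mem_limsup_iff_frequently_mem, frequently_cofinite_iff_infinite]
  set S := {a : {a : Fin n → ℤ // a ≠ 0} |
    ∀ j, intDist ((∑ i, (a.1 i : ℝ) * X (j, i)) - b j) < Ψ a}
  have hS : S.Infinite := fun hfin => hinf.sdiff (finite_singleton 0) <|
    (hfin.image Subtype.val).subset fun a ⟨ha, ha0⟩ => ⟨⟨a, ha0⟩, ha, rfl⟩
  refine (Set.Infinite.image (f := fun a : {a : Fin n → ℤ // a ≠ 0} =>
      (a, cellLabel b (min (Ψ a) 1 / anorm a.1) a (i₀ a) X))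
    (fun a _ a' _ h => congrArg Prod.fst h) hS).mono ?_
  rintro _ ⟨a, ha, rfl⟩
  exact ⟨⟨hbox, fun j => lt_min (ha j) ((abs_sub_round _).trans_lt (by norm_num))⟩, rfl⟩

end

theorem stmt7_general {n m : ℕ} (hn : 0 < n) (hm : 0 < m) (b : Fin m → ℝ)
    (Ψ : (Fin n → ℤ) → ℝ)
    (δ : ℝ) (hδ : 0 < δ) (s : ℝ) (hs : s = ((n : ℝ) - 1) * m + δ)
    (hconv : ∑' a : {a : Fin n → ℤ // a ≠ 0},
        ENNReal.ofReal (Ψ a.1 ^ δ * (anorm a.1 : ℝ) ^ ((m : ℝ) - δ)) ≠ ⊤) :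
    μH[s] (W n m b Ψ) = 0 := by
  obtain rfl : s = ((n - 1) * m : ℕ) + δ := by rw [hs, Nat.cast_mul, Nat.cast_pred hn]
  obtain ⟨β, hβ⟩ : ∃ β : ℕ, ∀ j, |b j| ≤ β := ⟨⌈∑ j, |b j|⌉₊, fun j =>
    (Finset.single_le_sum (fun j _ => abs_nonneg (b j)) (Finset.mem_univ j)).trans (Nat.le_ceil _)⟩
  choose i₀ hi₀ using fun a : {a : Fin n → ℤ // a ≠ 0} => exists_natAbs_eq_anorm a.2
  refine measure_mono_null (W_subset_limsup_cell b Ψ i₀)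
    (hausdorffMeasure_limsup_cofinite_eq_zero (by positivity) ?_)
  have hterm (a : {a : Fin n → ℤ // a ≠ 0}) :=
    (tsum_ediam_cell_rpow_le hm hβ (min_le_right (Ψ a) 1) a.2 (hi₀ a) hδ).trans <|
      mul_le_mul_right (ENNReal.ofReal_le_ofReal <|
        mul_le_mul_of_nonneg_right (Real.min_one_rpow_le hδ.le) (by positivity)) _
  rw [ENNReal.tsum_prod']
  exact ne_top_of_le_ne_top (ENNReal.mul_ne_top ENNReal.ofReal_ne_top hconv)
    ((ENNReal.tsum_le_tsum hterm).trans_eq ENNReal.tsum_mul_left)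

theorem stmt7 {n m : ℕ} (hn : 0 < n) (hm : 0 < m) (hnm : 2 < n + m) (b : Fin m → ℝ)
    (Ψ : (Fin n → ℤ) → ℝ) (hΨ0 : ∀ a, 0 ≤ Ψ a)
    (hΨlim : ∀ ε > (0:ℝ), ∃ N : ℕ, ∀ a : Fin n → ℤ, N ≤ anorm a → Ψ a < ε)
    (δ : ℝ) (hδ : 0 < δ) (s : ℝ) (hs : s = ((n : ℝ) - 1) * m + δ)
    (hconv : ∑' a : {a : Fin n → ℤ // a ≠ 0},
        ENNReal.ofReal (Ψ a.1 ^ δ * (anorm a.1 : ℝ) ^ ((m : ℝ) - δ)) ≠ ⊤) :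
    μH[s] (W n m b Ψ) = 0 :=
  stmt7_general hn hm b Ψ δ hδ s hs hconv
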